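/- Let m ≥ 1. For every c : Fin m → ZMod 2 and every ε : ZMod 4, the function f : (Fin m → ZMod 2) → ZMod 4 given by f(x) = ∑ j, ((x j).val : ZMod 4) + 2 * ((∑ j, c j * x j).val : ZMod 4) + ε is bent: Complex.normSq (f̂ u) = 2^m for every u. (In words: the coset Q + ZRM(1,m), where Q(x) = x_0 + x_1 + ⋯ + x_{m−1} is the Z_4-valued quadratic form of the identity matrix, is a quaternary constant-amplitude code with 2^{m+2} codewords.) -/

import Mathlib

/-!
Write `i^k` and `(-1)^s` as additive characters of `ZMod 4` and `ZMod 2`. Both `Q` and the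
linear term `2 (c · x)` are sums of one-coordinate functions (the latter because
`s ↦ 2 s̃ : ZMod 2 → ZMod 4` is additive), so `f̂(u)` factors over the coordinates as
`i^ε ∏ⱼ (1 + i (-1)^(cⱼ + uⱼ))`, and every factor has squared modulus `2`.
-/

/-- The Fourier transform of a `ZMod 4`-valued generalized Boolean function. -/
noncomputable def fourier4 {m : ℕ} (f : (Fin m → ZMod 2) → ZMod 4) (u : Fin m → ZMod 2) : ℂ :=
  ∑ x : Fin m → ZMod 2, Complex.I ^ (f x).val * (-1 : ℂ) ^ (∑ j, u j * x j).val

open Finset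

lemma AddChar.map_sum_eq_prod {A M ι : Type*} [AddCommMonoid A] [CommMonoid M]
    (ψ : AddChar A M) (s : Finset ι) (g : ι → A) :
    ψ (∑ i ∈ s, g i) = ∏ i ∈ s, ψ (g i) := by
  induction s using Finset.cons_induction with
  | empty => simp
  | cons a s ha ih => rw [sum_cons, prod_cons, map_add_eq_mul, ih]

noncomputable def iChar : AddChar (ZMod 4) ℂ := AddChar.zmodChar 4 Complex.I_pow_four

noncomputable def signChar : AddChar (ZMod 2) ℂ := AddChar.zmodChar 2 neg_one_sq

lemma iChar_apply (a : ZMod 4) : iChar a = Complex.I ^ a.val := rfl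

lemma signChar_apply (a : ZMod 2) : signChar a = (-1 : ℂ) ^ a.val := rfl

-- Additive because the carry of `ZMod.val (a + b)` is killed by the factor `2`.
def doubleCast : ZMod 2 →+ ZMod 4 where
  toFun s := 2 * (s.val : ZMod 4)
  map_zero' := rfl
  map_add' := by decide

theorem fourier4_eq_mul_prod_sum {m : ℕ} (f : (Fin m → ZMod 2) → ZMod 4)
    (g : Fin m → ZMod 2 → ZMod 4) (ε : ZMod 4) (hf : ∀ x, f x = ∑ j, g j (x j) + ε)
    (u : Fin m → ZMod 2) :
    fourier4 f u = iChar ε * ∏ j, ∑ b, iChar (g j b) * signChar (u j * b) := by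
  have hsummand : ∀ x, Complex.I ^ (f x).val * (-1 : ℂ) ^ (∑ j, u j * x j).val
      = iChar ε * ∏ j, iChar (g j (x j)) * signChar (u j * x j) := by
    intro x
    rw [← iChar_apply, ← signChar_apply, hf, AddChar.map_add_eq_mul, AddChar.map_sum_eq_prod,
      AddChar.map_sum_eq_prod, prod_mul_distrib]
    ring
  rw [fourier4, Fintype.prod_sum, mul_sum]
  exact sum_congr rfl fun x _ => hsummand x

lemma iChar_one : iChar 1 = Complex.I :=
  pow_one Complex.I

lemma doubleCast_val (s : ZMod 2) : (doubleCast s).val = 2 * s.val := by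
  fin_cases s <;> rfl

lemma iChar_doubleCast (s : ZMod 2) : iChar (doubleCast s) = signChar s := by
  rw [iChar_apply, signChar_apply, doubleCast_val, pow_mul, Complex.I_sq]

lemma signChar_eq_one_or_eq_neg_one (a : ZMod 2) : signChar a = 1 ∨ signChar a = -1 :=
  neg_one_pow_eq_or ℂ a.val

lemma sum_iChar_mul_signChar (a d : ZMod 2) :
    ∑ b : ZMod 2, iChar ((b.val : ZMod 4) + doubleCast (a * b)) * signChar (d * b)
      = 1 + Complex.I * signChar (a + d) := by
  rw [show (univ : Finset (ZMod 2)) = {0, 1} from rfl, sum_pair zero_ne_one]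
  simp only [ZMod.val_zero, ZMod.val_one, Nat.cast_zero, Nat.cast_one, mul_zero, mul_one,
    map_zero, zero_add, AddChar.map_zero_eq_one, AddChar.map_add_eq_mul, iChar_doubleCast,
    iChar_one]
  ring

lemma normSq_one_add_I_mul_signChar (a : ZMod 2) :
    Complex.normSq (1 + Complex.I * signChar a) = 2 := by
  rcases signChar_eq_one_or_eq_neg_one a with h | h <;> simp [h, Complex.normSq_apply] <;> norm_num

theorem stmt15_general (m : ℕ) (c : Fin m → ZMod 2) (ε : ZMod 4)
    (f : (Fin m → ZMod 2) → ZMod 4)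
    (hf : ∀ x, f x = ∑ j, ((x j).val : ZMod 4) + 2 * ((∑ j, c j * x j).val : ZMod 4) + ε) :
    ∀ u, Complex.normSq (fourier4 f u) = 2 ^ m := by
  intro u
  have hsep : ∀ x, f x = ∑ j, (((x j).val : ZMod 4) + doubleCast (c j * x j)) + ε := by
    intro x
    rw [hf, sum_add_distrib, ← map_sum]
    rfl
  have hε : Complex.normSq (iChar ε) = 1 := by
    rw [iChar_apply, map_pow, Complex.normSq_I, one_pow]
  rw [fourier4_eq_mul_prod_sum f (fun j b => (b.val : ZMod 4) + doubleCast (c j * b)) ε hsep,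
    map_mul, hε, one_mul, map_prod]
  simp only [sum_iChar_mul_signChar, normSq_one_add_I_mul_signChar, prod_const, card_univ,
    Fintype.card_fin]

/-- Every word of the coset `Q + ZRM(1,m)`, where `Q(x) = x₀ + x₁ + ⋯ + x_{m-1}` is the
`ZMod 4`-valued quadratic form of the identity matrix, is bent: the coset is a quaternary
constant-amplitude code with `2^{m+2}` codewords. -/
theorem stmt15 (m : ℕ) (hm : 1 ≤ m) (c : Fin m → ZMod 2) (ε : ZMod 4)
    (f : (Fin m → ZMod 2) → ZMod 4)
    (hf : ∀ x, f x = ∑ j, ((x j).val : ZMod 4) + 2 * ((∑ j, c j * x j).val : ZMod 4) + ε) :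
    ∀ u, Complex.normSq (fourier4 f u) = 2 ^ m :=
  stmt15_general m c ε f hf
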